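/- arXiv:1109.0336 — 2 statements merged into one kernel-verified Lean document; each statement's English description precedes it below -/
import Mathlib

section
/- Let p,q ≥ 0, n = p+q ≥ 1, and let γ be a (p,q)-clan. A complete flag F in ℂⁿ satisfies dim(F_i ∩ E_p) = γ(i;+) and dim(F_i ∩ Ẽ_q) = γ(i;−) for all 1 ≤ i ≤ n if and only if there exists a (p,q)-clan λ with FS(λ) = FS(γ) such that F ∈ Q_λ. In other words, the set Y₀ = { F : dim(F_i ∩ E_p) = γ(i;+) and dim(F_i ∩ Ẽ_q) = γ(i;−) for all i } is precisely the union of the sets Q_λ over all clans λ having the same FS-pattern as γ. -/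
open Finset Module

noncomputable section

/-- Symbols of an FS-pattern: `+`, `-`, `F` (first occurrence / opener),
`S` (second occurrence / closer). -/
inductive FSSymbol : Type
  | plus : FSSymbol
  | minus : FSSymbol
  | fst : FSSymbol
  | snd : FSSymbol
  deriving DecidableEq

/-- A `(p,q)`-clan on `{1,…,p+q}` (positions are `Fin (p+q)`, `0`-based).
`symbol i = Sum.inl j` means positions `i` and `j` carry the same natural
number (they form an arc), and `symbol i = Sum.inr true` (resp. `false`)
means position `i` carries a `+` (resp. a `-`).  The number of `+`'s minus
the number of `-`'s equals `p - q`. -/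
structure Clan (p q : ℕ) where
  symbol : Fin (p + q) → (Fin (p + q)) ⊕ Bool
  mate_ne : ∀ i j, symbol i = Sum.inl j → j ≠ i
  mate_invol : ∀ i j, symbol i = Sum.inl j → symbol j = Sum.inl i
  balance : (univ.filter fun i => symbol i = Sum.inr true).card + q
      = (univ.filter fun i => symbol i = Sum.inr false).card + p

namespace Clan

variable {p q : ℕ}

/-- `γ(i;+)`: the number of `+` signs and of arcs `(s,t)` with `t ≤ i`
among the first `i` positions (`i` is `1`-based). -/
def cplus (γ : Clan p q) (i : ℕ) : ℕ :=
  (univ.filter fun k : Fin (p + q) =>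
    k.val < i ∧ (γ.symbol k = Sum.inr true ∨ ∃ j, γ.symbol k = Sum.inl j ∧ j < k)).card

/-- `γ(i;-)`: the number of `-` signs and of arcs `(s,t)` with `t ≤ i`
among the first `i` positions (`i` is `1`-based). -/
def cminus (γ : Clan p q) (i : ℕ) : ℕ :=
  (univ.filter fun k : Fin (p + q) =>
    k.val < i ∧ (γ.symbol k = Sum.inr false ∨ ∃ j, γ.symbol k = Sum.inl j ∧ j < k)).card

/-- `γ(i;j)`: the number of arcs `(s,t)` with `s ≤ i < j < t`
(`i`, `j` are `1`-based). -/
def cpair (γ : Clan p q) (i j : ℕ) : ℕ :=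
  (univ.filter fun s : Fin (p + q) =>
    s.val < i ∧ ∃ t, γ.symbol s = Sum.inl t ∧ s < t ∧ j ≤ t.val).card

/-- The FS-pattern of a clan: signs stay, openers become `F`, closers `S`. -/
def FS (γ : Clan p q) (i : Fin (p + q)) : FSSymbol :=
  match γ.symbol i with
  | Sum.inr true => FSSymbol.plus
  | Sum.inr false => FSSymbol.minus
  | Sum.inl j => if j < i then FSSymbol.snd else FSSymbol.fst

/-- A clan avoids the pattern `(1,2,1,2)` iff no two of its arcs cross. -/
def Avoids1212 (γ : Clan p q) : Prop :=
  ¬ ∃ i1 i2 i3 i4 : Fin (p + q), i1 < i2 ∧ i2 < i3 ∧ i3 < i4 ∧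
      γ.symbol i1 = Sum.inl i3 ∧ γ.symbol i2 = Sum.inl i4

/-- `γ₊`: positions carrying a `+` or the second occurrence of a number. -/
def plusSet (γ : Clan p q) : Finset (Fin (p + q)) :=
  univ.filter fun i => γ.symbol i = Sum.inr true ∨ ∃ j, γ.symbol i = Sum.inl j ∧ j < i

/-- `γ̃₊`: positions carrying a `+` or the first occurrence of a number. -/
def tplusSet (γ : Clan p q) : Finset (Fin (p + q)) :=
  univ.filter fun i => γ.symbol i = Sum.inr true ∨ ∃ j, γ.symbol i = Sum.inl j ∧ i < j

end Clan

/-- The rank matrix `r_w(i,j) = #{k ≤ i : w(k) ≤ j}` (`i`, `j` are `1`-based). -/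
def rankMatrix {n : ℕ} (w : Equiv.Perm (Fin n)) (i j : ℕ) : ℕ :=
  (univ.filter fun k : Fin n => k.val < i ∧ (w k).val < j).card

/-- `u` is the permutation `u(γ)`: it assigns the values `p, p-1, …, 1` to the
positions of `γ₊` taken in increasing order, and `n, n-1, …, p+1` to the
positions of `γ₋` taken in increasing order (values are `0`-based, so the
`1`-based value of `u` at `i` is `(u i).val + 1`). -/
def IsUPerm {p q : ℕ} (γ : Clan p q) (u : Equiv.Perm (Fin (p + q))) : Prop :=
  ∀ i : Fin (p + q),
    (i ∈ γ.plusSet → (u i).val + 1 + (γ.plusSet.filter fun j => j < i).card = p) ∧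
    (i ∉ γ.plusSet →
      (u i).val + 1 + (univ.filter fun j => j ∉ γ.plusSet ∧ j < i).card = p + q)

/-- `v` is the permutation `v(γ)`: it assigns the values `1, …, p` to the
positions of `γ̃₊` taken in increasing order, and `p+1, …, n` to the
positions of `γ̃₋` taken in increasing order (values are `0`-based). -/
def IsVPerm {p q : ℕ} (γ : Clan p q) (v : Equiv.Perm (Fin (p + q))) : Prop :=
  ∀ i : Fin (p + q),
    (i ∈ γ.tplusSet → (v i).val = (γ.tplusSet.filter fun j => j < i).card) ∧
    (i ∉ γ.tplusSet →
      (v i).val = p + (univ.filter fun j => j ∉ γ.tplusSet ∧ j < i).card)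

/-- `E_j ⊆ ℂⁿ`: the span of the first `j` standard basis vectors, realized as
the subspace of vectors vanishing in coordinates `≥ j`. -/
def Efirst (n j : ℕ) : Submodule ℂ (Fin n → ℂ) :=
  ⨅ k ∈ {k : Fin n | j ≤ k.val}, LinearMap.ker (LinearMap.proj k : (Fin n → ℂ) →ₗ[ℂ] ℂ)

/-- `Ẽ_j ⊆ ℂⁿ`: the span of the last `j` standard basis vectors, realized as
the subspace of vectors vanishing in coordinates `< n - j`. -/
def Elast (n j : ℕ) : Submodule ℂ (Fin n → ℂ) :=
  ⨅ k ∈ {k : Fin n | k.val < n - j}, LinearMap.ker (LinearMap.proj k : (Fin n → ℂ) →ₗ[ℂ] ℂ)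

/-- The projection `π : ℂⁿ → E_p` with kernel `Ẽ_q` (for `n = p + q`). -/
def projE (n p : ℕ) : (Fin n → ℂ) →ₗ[ℂ] (Fin n → ℂ) where
  toFun v := fun k => if k.val < p then v k else 0
  map_add' u v := by funext k; by_cases h : k.val < p <;> simp [h]
  map_smul' c v := by funext k; by_cases h : k.val < p <;> simp [h]

/-- A complete flag `F_0 ⊂ F_1 ⊂ ⋯ ⊂ F_n` in `ℂⁿ`, `dim F_i = i`. -/
structure CompleteFlag (n : ℕ) where
  F : Fin (n + 1) → Submodule ℂ (Fin n → ℂ)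
  mono : Monotone F
  finrank_eq : ∀ i, finrank ℂ ↥(F i) = i.val

/-- Membership of a complete flag in the set `Q_γ`: the three linear-algebraic
conditions of Theorem `orbit_description`. -/
def MemQ {p q : ℕ} (γ : Clan p q) (Fl : CompleteFlag (p + q)) : Prop :=
  (∀ i : ℕ, 1 ≤ i → ∀ hi : i ≤ p + q,
      finrank ℂ ↥(Fl.F ⟨i, by omega⟩ ⊓ Efirst (p + q) p) = γ.cplus i ∧
      finrank ℂ ↥(Fl.F ⟨i, by omega⟩ ⊓ Elast (p + q) q) = γ.cminus i) ∧
  (∀ i j : ℕ, 1 ≤ i → ∀ hij : i < j, ∀ hj : j ≤ p + q,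
      finrank ℂ ↥((Fl.F ⟨i, by omega⟩).map (projE (p + q) p) ⊔ Fl.F ⟨j, by omega⟩)
        = j + γ.cpair i j)

/-- Membership in `K = GL(p,ℂ) × GL(q,ℂ)`, the block-diagonal subgroup of
`GL(p+q, ℂ)`: all entries mixing the first `p` and last `q` coordinates
vanish. -/
def InK (p q : ℕ) (g : (Matrix (Fin (p + q)) (Fin (p + q)) ℂ)ˣ) : Prop :=
  ∀ i j : Fin (p + q), ¬(i.val < p ↔ j.val < p) →
    (g : Matrix (Fin (p + q)) (Fin (p + q)) ℂ) i j = 0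

/-- `Fl' = g · Fl`: the flag `Fl'` is obtained by applying the invertible
matrix `g` to each subspace of the flag `Fl`. -/
def FlagMapsTo {n : ℕ} (g : (Matrix (Fin n) (Fin n) ℂ)ˣ) (Fl Fl' : CompleteFlag n) : Prop :=
  ∀ i, Fl'.F i = (Fl.F i).map (Matrix.mulVecLin (g : Matrix (Fin n) (Fin n) ℂ))

/-- A partial matching of `{1,…,n}`, given by its set of arcs `(s,t)`, `s < t`;
distinct arcs are disjoint. -/
def IsPartialMatching {n : ℕ} (M : Finset (Fin n × Fin n)) : Prop :=
  (∀ a ∈ M, a.1 < a.2) ∧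
  ∀ a ∈ M, ∀ b ∈ M, a ≠ b → a.1 ≠ b.1 ∧ a.1 ≠ b.2 ∧ a.2 ≠ b.1 ∧ a.2 ≠ b.2

/-- The number of crossing pairs of arcs of `M` (each crossing pair counted
once, ordered by its smaller opener). -/
def crossNum {n : ℕ} (M : Finset (Fin n × Fin n)) : ℕ :=
  ((M ×ˢ M).filter fun ab =>
    ab.1.1 < ab.2.1 ∧ ab.2.1 < ab.1.2 ∧ ab.1.2 < ab.2.2).card

/-- `M` is a noncrossing partial matching whose openers are exactly the
`F`-positions of the pattern `d` and whose closers are exactly the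
`S`-positions of `d`. -/
def MatchesPattern {n : ℕ} (d : Fin n → FSSymbol) (M : Finset (Fin n × Fin n)) : Prop :=
  IsPartialMatching M ∧
  (∀ i : Fin n, (∃ t, (i, t) ∈ M) ↔ d i = FSSymbol.fst) ∧
  (∀ i : Fin n, (∃ s, (s, i) ∈ M) ↔ d i = FSSymbol.snd) ∧
  ¬ ∃ a ∈ M, ∃ b ∈ M, a.1 < b.1 ∧ b.1 < a.2 ∧ a.2 < b.2

/-- The values `{w(1),…,w(i)}` arranged in increasing order. -/
def sortedPrefix {n : ℕ} (w : Equiv.Perm (Fin n)) (i : ℕ) : List (Fin n) :=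
  Finset.sort ((univ.filter fun k : Fin n => k.val < i).image w) (· ≤ ·)

/-!
Write `r(i, j) = dim (π(F_i) + F_j)`. Each step in `i` or in `j` raises `r` by at most one,
and by submodularity the `j` with `r(s - 1, j) < r(s, j)` form an initial segment `j < t`.
Joining each such `s < t` to `t` gives a partial matching with
`r(i, j) = j + #{arcs (s, t) : s ≤ i < j < t}`. As `π` is a projection,
`r(i, i) + dim (F_i ∩ E_p) + dim (F_i ∩ Ẽ_q) = 2i`, so the conditions defining `Y₀` fix the
diagonal increments of `r`, and these force the openers and closers of the matching to be the
`F`- and `S`-positions of `γ`. The matching with the signs of `γ` is a clan `λ` with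
`FS(λ) = FS(γ)` and `F ∈ Q_λ`. Conversely, `γ(i; ±)` only depend on `FS(γ)`.
-/

theorem Fin.card_filter_val_lt_succ {n : ℕ} (P : Fin n → Prop) [DecidablePred P] {i : ℕ}
    (hi : i < n) :
    #{s : Fin n | (s : ℕ) < i + 1 ∧ P s} =
      #{s : Fin n | (s : ℕ) < i ∧ P s} + if P ⟨i, hi⟩ then 1 else 0 := by
  have hsplit : (univ.filter fun s : Fin n => (s : ℕ) < i + 1 ∧ P s) =
      (univ.filter fun s : Fin n => (s : ℕ) < i ∧ P s) ∪
        univ.filter fun s : Fin n => s = ⟨i, hi⟩ ∧ P s := by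
    ext s
    simp only [mem_filter, mem_univ, true_and, mem_union, Fin.ext_iff, ← or_and_right,
      Nat.lt_succ_iff_lt_or_eq]
  rw [hsplit, card_union_of_disjoint (disjoint_filter.2 fun s _ h1 h2 => by
    simp only [Fin.ext_iff] at h2; omega)]
  split_ifs with hP
  · refine congrArg _ (card_eq_one.mpr ⟨⟨i, hi⟩, ?_⟩)
    ext s
    simp only [mem_filter, mem_univ, true_and, mem_singleton, and_iff_left_iff_imp]
    rintro rfl
    exact hP
  · simp [hP]

theorem eq_add_card_filter_lt_succ {n : ℕ} (f : ℕ → ℕ)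
    (hf : ∀ s, f s ≤ f (s + 1) ∧ f (s + 1) ≤ f s + 1) {i : ℕ} (hi : i ≤ n) :
    f i = f 0 + #{s : Fin n | (s : ℕ) < i ∧ f s < f (s + 1)} := by
  induction i with
  | zero => simp
  | succ i ih =>
    rw [Fin.card_filter_val_lt_succ (fun s : Fin n => f s < f (s + 1)) hi, ← add_assoc,
      ← ih (by omega)]
    have := hf i
    dsimp only
    split_ifs <;> omega

theorem Nat.exists_le_lt_and_not_succ {P : ℕ → Prop} {j m : ℕ} (hjm : j ≤ m) (hj : P j)
    (hm : ¬ P m) : ∃ u, j ≤ u ∧ u < m ∧ P u ∧ ¬ P (u + 1) := by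
  induction m, hjm using Nat.le_induction with
  | base => exact absurd hj hm
  | succ m hjm ih =>
    by_cases hPm : P m
    · exact ⟨m, hjm, m.lt_succ_self, hPm, hm⟩
    · obtain ⟨u, hju, hum, hu⟩ := ih hPm
      exact ⟨u, hju, by omega, hu⟩

section LinearAlgebra

variable {K V : Type*} [Field K] [AddCommGroup V] [Module K V]

theorem LinearMap.IsIdempotentElem.map_sup_le_of_le_map_sup {f : V →ₗ[K] V}
    (hf : IsIdempotentElem f) {G G' : Submodule K V} (h : G' ≤ G.map f ⊔ G) :
    G'.map f ⊔ G' ≤ G.map f ⊔ G := by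
  refine sup_le ?_ h
  calc G'.map f ≤ (G.map f ⊔ G).map f := Submodule.map_mono h
    _ = G.map f := by
      rw [Submodule.map_sup, ← Submodule.map_comp, ← Module.End.mul_eq_comp, hf.eq, sup_idem]
    _ ≤ G.map f ⊔ G := le_sup_left

variable [FiniteDimensional K V]

theorem finrank_sup_span_singleton_le (A : Submodule K V) (x : V) :
    finrank K ↥(A ⊔ K ∙ x) ≤ finrank K A + 1 := by
  refine (Submodule.finrank_add_le_finrank_add_finrank A _).trans (Nat.add_le_add_left ?_ _)
  simpa using finrank_span_le_card ({x} : Set V)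

theorem finrank_lt_finrank_sup_span_singleton_iff {A : Submodule K V} {x : V} :
    finrank K A < finrank K ↥(A ⊔ K ∙ x) ↔ x ∉ A := by
  refine ⟨fun hlt hx => ?_, fun hx => ?_⟩
  · rw [sup_eq_left.2 ((Submodule.span_singleton_le_iff_mem x A).2 hx)] at hlt
    exact lt_irrefl _ hlt
  · rw [Submodule.finrank_sup_span_singleton hx]
    exact Nat.lt_succ_self _

theorem Submodule.finrank_map_add_finrank_inf_ker (f : V →ₗ[K] V) (G : Submodule K V) :
    finrank K ↥(G.map f) + finrank K ↥(G ⊓ LinearMap.ker f) = finrank K G := by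
  have h := LinearMap.finrank_range_add_finrank_ker (f.domRestrict G)
  rwa [LinearMap.range_domRestrict, LinearMap.ker_domRestrict,
    show (LinearMap.ker f).comap G.subtype = (LinearMap.ker f ⊓ G).comap G.subtype by
      ext x; simp,
    (Submodule.comapSubtypeEquivOfLe inf_le_right).finrank_eq, inf_comm] at h

namespace LinearMap.IsIdempotentElem

variable {f : V →ₗ[K] V} (hf : IsIdempotentElem f)
include hf

theorem finrank_map_sup_add_finrank_inf_range_add_finrank_inf_ker (G : Submodule K V) :
    finrank K ↥(G.map f ⊔ G) + finrank K ↥(G ⊓ LinearMap.range f)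
      + finrank K ↥(G ⊓ LinearMap.ker f) = 2 * finrank K G := by
  set g : V →ₗ[K] V := 1 - f
  have hg : IsIdempotentElem g := hf.one_sub
  have hfg : ∀ x, f x + g x = x := fun x => by simp [g]
  have hsup : G.map f ⊔ G = G.map g ⊔ G := by
    refine le_antisymm (sup_le ?_ le_sup_right) (sup_le ?_ le_sup_right) <;>
      rintro _ ⟨x, hx, rfl⟩
    · rw [eq_sub_of_add_eq (hfg x)]
      exact sub_mem (Submodule.mem_sup_right hx) (Submodule.mem_sup_left ⟨x, hx, rfl⟩)
    · rw [eq_sub_of_add_eq' (hfg x)]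
      exact sub_mem (Submodule.mem_sup_right hx) (Submodule.mem_sup_left ⟨x, hx, rfl⟩)
  have hinf : G.map g ⊓ G = G ⊓ LinearMap.ker f := by
    rw [ker_eq_range_one_sub hf]
    apply le_antisymm
    · rintro _ ⟨⟨y, hy, rfl⟩, hyG⟩
      exact ⟨hyG, y, rfl⟩
    · rintro x ⟨hxG, hx⟩
      exact ⟨⟨x, hxG, (mem_range_iff hg).mp hx⟩, hxG⟩
  have hrank := Submodule.finrank_map_add_finrank_inf_ker g G
  rw [← range_eq_ker_one_sub hf] at hrank
  have hdim := Submodule.finrank_sup_add_finrank_inf_eq (G.map g) G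
  rw [hinf] at hdim
  rw [hsup]
  omega

end LinearMap.IsIdempotentElem

end LinearAlgebra

@[simp]
theorem mem_Efirst {n j : ℕ} {x : Fin n → ℂ} : x ∈ Efirst n j ↔ ∀ k : Fin n, j ≤ k → x k = 0 := by
  simp [Efirst, Submodule.mem_iInf]

@[simp]
theorem mem_Elast {n j : ℕ} {x : Fin n → ℂ} : x ∈ Elast n j ↔ ∀ k : Fin n, k < n - j → x k = 0 := by
  simp [Elast, Submodule.mem_iInf]

theorem projE_apply (n p : ℕ) (x : Fin n → ℂ) (k : Fin n) :
    projE n p x k = if (k : ℕ) < p then x k else 0 := rfl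

theorem isIdempotentElem_projE (n p : ℕ) : IsIdempotentElem (projE n p) := by
  refine LinearMap.ext fun x => funext fun k => ?_
  simp only [Module.End.mul_apply, projE_apply]
  split_ifs <;> rfl

theorem range_projE (n p : ℕ) : LinearMap.range (projE n p) = Efirst n p := by
  ext x
  rw [LinearMap.IsIdempotentElem.mem_range_iff (isIdempotentElem_projE n p), mem_Efirst,
    funext_iff]
  refine forall_congr' fun k => ?_
  rw [projE_apply]
  split_ifs with hk
  · simp [hk]
  · simp [Nat.le_of_not_lt hk, eq_comm]

theorem ker_projE (p q : ℕ) : LinearMap.ker (projE (p + q) p) = Elast (p + q) q := by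
  ext x
  rw [LinearMap.mem_ker, mem_Elast, funext_iff]
  refine forall_congr' fun k => ?_
  rw [projE_apply, show p + q - q = p by omega]
  split_ifs with hk <;> simp [hk]

namespace CompleteFlag

variable {n : ℕ} (Fl : CompleteFlag n)

/-- `F_i`, indexed by a natural number and constant `= ℂⁿ` from `i = n` on. -/
def space (i : ℕ) : Submodule ℂ (Fin n → ℂ) := Fl.F ⟨min i n, by omega⟩

theorem F_mk_eq_space {i : ℕ} (hi : i < n + 1) : Fl.F ⟨i, hi⟩ = Fl.space i := by
  simp only [space, Nat.min_eq_left (Nat.lt_succ_iff.mp hi)]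

theorem space_mono : Monotone Fl.space := fun _ _ hij =>
  Fl.mono (Fin.mk_le_mk.mpr (min_le_min_right n hij))

theorem finrank_space {i : ℕ} (hi : i ≤ n) : finrank ℂ ↥(Fl.space i) = i := by
  rw [space, Fl.finrank_eq, Fin.val_mk, Nat.min_eq_left hi]

theorem space_zero : Fl.space 0 = ⊥ :=
  Submodule.finrank_eq_zero.mp (Fl.finrank_space (Nat.zero_le n))

theorem space_eq_top {i : ℕ} (hi : n ≤ i) : Fl.space i = ⊤ := by
  apply Submodule.eq_top_of_finrank_eq
  rw [space, Fl.finrank_eq, Fin.val_mk, Nat.min_eq_right hi, Module.finrank_fin_fun]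

theorem exists_space_succ_eq_sup (i : ℕ) : ∃ v, Fl.space (i + 1) = Fl.space i ⊔ ℂ ∙ v := by
  by_cases hi : n ≤ i
  · exact ⟨0, by simp [Fl.space_eq_top hi, Fl.space_eq_top (hi.trans i.le_succ)]⟩
  push Not at hi
  have hlt : Fl.space i < Fl.space (i + 1) := by
    refine lt_of_le_of_ne (Fl.space_mono i.le_succ) fun h => ?_
    have := Fl.finrank_space hi.le
    rw [h, Fl.finrank_space hi] at this
    omega
  obtain ⟨v, hv, hvi⟩ := SetLike.exists_of_lt hlt
  refine ⟨v, (Submodule.eq_of_le_of_finrank_eq (sup_le (Fl.space_mono i.le_succ)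
    ((Submodule.span_singleton_le_iff_mem v _).2 hv)) ?_).symm⟩
  rw [Submodule.finrank_sup_span_singleton hvi, Fl.finrank_space hi.le, Fl.finrank_space hi]

variable (f : (Fin n → ℂ) →ₗ[ℂ] (Fin n → ℂ))

def rk (i j : ℕ) : ℕ := finrank ℂ ↥((Fl.space i).map f ⊔ Fl.space j)

theorem rk_zero_left {j : ℕ} (hj : j ≤ n) : Fl.rk f 0 j = j := by
  rw [rk, space_zero, Submodule.map_bot, bot_sup_eq, Fl.finrank_space hj]

theorem rk_of_le_right (i : ℕ) {j : ℕ} (hj : n ≤ j) : Fl.rk f i j = n := by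
  rw [rk, Fl.space_eq_top hj, sup_top_eq, finrank_top, Module.finrank_fin_fun]

theorem rk_succ_left_eq {i : ℕ} {v : Fin n → ℂ} (hv : Fl.space (i + 1) = Fl.space i ⊔ ℂ ∙ v)
    (j : ℕ) :
    Fl.rk f (i + 1) j = finrank ℂ ↥(((Fl.space i).map f ⊔ Fl.space j) ⊔ ℂ ∙ f v) := by
  rw [rk, hv, Submodule.map_sup, Submodule.map_span, Set.image_singleton, sup_right_comm]

theorem rk_succ_left_bounds (i j : ℕ) :
    Fl.rk f i j ≤ Fl.rk f (i + 1) j ∧ Fl.rk f (i + 1) j ≤ Fl.rk f i j + 1 := by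
  obtain ⟨v, hv⟩ := Fl.exists_space_succ_eq_sup i
  rw [Fl.rk_succ_left_eq f hv]
  exact ⟨Submodule.finrank_mono le_sup_left, finrank_sup_span_singleton_le _ _⟩

theorem rk_succ_right_bounds (i j : ℕ) :
    Fl.rk f i j ≤ Fl.rk f i (j + 1) ∧ Fl.rk f i (j + 1) ≤ Fl.rk f i j + 1 := by
  obtain ⟨v, hv⟩ := Fl.exists_space_succ_eq_sup j
  rw [rk, rk, hv, ← sup_assoc]
  exact ⟨Submodule.finrank_mono le_sup_left, finrank_sup_span_singleton_le _ _⟩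

def Raises (s j : ℕ) : Prop := Fl.rk f s j < Fl.rk f (s + 1) j

instance (s j : ℕ) : Decidable (Fl.Raises f s j) := inferInstanceAs (Decidable (_ < _))

theorem raises_iff_notMem {s : ℕ} {v : Fin n → ℂ} (hv : Fl.space (s + 1) = Fl.space s ⊔ ℂ ∙ v)
    (j : ℕ) : Fl.Raises f s j ↔ f v ∉ (Fl.space s).map f ⊔ Fl.space j := by
  rw [Raises, Fl.rk_succ_left_eq f hv]
  exact finrank_lt_finrank_sup_span_singleton_iff

variable {Fl f} in
theorem Raises.of_le {s j j' : ℕ} (h : Fl.Raises f s j') (hj : j ≤ j') : Fl.Raises f s j := by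
  obtain ⟨v, hv⟩ := Fl.exists_space_succ_eq_sup s
  rw [Fl.raises_iff_notMem f hv] at h ⊢
  exact fun hmem => h (sup_le_sup_left (Fl.space_mono hj) _ hmem)

theorem not_raises_of_le {s j : ℕ} (hj : n ≤ j) : ¬ Fl.Raises f s j := by
  simp [Raises, Fl.rk_of_le_right f _ hj]

theorem rk_eq_add_card {i j : ℕ} (hi : i ≤ n) (hj : j ≤ n) :
    Fl.rk f i j = j + #{s : Fin n | (s : ℕ) < i ∧ Fl.Raises f s j} := by
  rw [eq_add_card_filter_lt_succ (fun s => Fl.rk f s j) (Fl.rk_succ_left_bounds f · j) hi,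
    Fl.rk_zero_left f hj]
  rfl

def IsArc (s t : Fin n) : Prop := s < t ∧ Fl.Raises f s t ∧ ¬ Fl.Raises f s (t + 1)

instance (s t : Fin n) : Decidable (Fl.IsArc f s t) := inferInstanceAs (Decidable (_ ∧ _ ∧ _))

theorem exists_isArc_le_iff {s : Fin n} {j : ℕ} (hsj : (s : ℕ) < j) :
    (∃ t, Fl.IsArc f s t ∧ j ≤ t) ↔ Fl.Raises f s j := by
  refine ⟨fun ⟨t, ⟨_, ht, _⟩, hjt⟩ => ht.of_le hjt, fun hj => ?_⟩
  have hjn : j ≤ n := by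
    by_contra! hnj
    exact Fl.not_raises_of_le f hnj.le hj
  obtain ⟨u, hju, hun, hu, hu'⟩ :=
    Nat.exists_le_lt_and_not_succ hjn hj (Fl.not_raises_of_le f (s := s) le_rfl)
  exact ⟨⟨u, hun⟩, ⟨Fin.lt_def.mpr (hsj.trans_le hju), hu, hu'⟩, hju⟩

theorem exists_isArc_iff_raises (s : Fin n) :
    (∃ t, Fl.IsArc f s t) ↔ Fl.Raises f s (s + 1) := by
  rw [← Fl.exists_isArc_le_iff f (Nat.lt_succ_self s)]
  exact exists_congr fun t => (and_iff_left_of_imp fun h => Fin.lt_def.mp h.1).symm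

variable {Fl f} in
theorem IsArc.right_unique {s t t' : Fin n} (h : Fl.IsArc f s t) (h' : Fl.IsArc f s t') :
    t = t' := by
  by_contra hne
  rcases lt_or_gt_of_ne hne with hlt | hlt
  · exact h.2.2 (h'.2.1.of_le (Fin.lt_def.mp hlt))
  · exact h'.2.2 (h.2.1.of_le (Fin.lt_def.mp hlt))

theorem card_isArc_add_rk (t : Fin n) :
    #{s | Fl.IsArc f s t} + Fl.rk f t (t + 1) = Fl.rk f t t + 1 := by
  have hle := Fl.rk_eq_add_card f (i := t) (j := t) t.is_lt.le t.is_lt.le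
  have hlt := Fl.rk_eq_add_card f (i := t) (j := t + 1) t.is_lt.le t.is_lt
  -- a raise at `t + 1` is a raise at `t`, so arcs ending at `t` are the difference
  set A : Finset (Fin n) := {s | (s : ℕ) < t ∧ Fl.Raises f s t}
  have hsplit := card_filter_add_card_filter_not (s := A) (fun s => Fl.Raises f s (t + 1))
  have hboth : A.filter (fun s : Fin n => Fl.Raises f s (t + 1)) =
      ({s | (s : ℕ) < t ∧ Fl.Raises f s (t + 1)} : Finset (Fin n)) := by
    ext s
    simp only [A, mem_filter, mem_univ, true_and]
    exact ⟨fun h => ⟨h.1.1, h.2⟩, fun h => ⟨⟨h.1, h.2.of_le (t : ℕ).le_succ⟩, h.2⟩⟩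
  have harc : A.filter (fun s : Fin n => ¬ Fl.Raises f s (t + 1)) =
      ({s | Fl.IsArc f s t} : Finset (Fin n)) := by
    ext s
    simp only [A, mem_filter, mem_univ, true_and, IsArc, Fin.lt_def, and_assoc]
  rw [hboth, harc] at hsplit
  omega

theorem exists_isArc_left_iff (t : Fin n) :
    (∃ s, Fl.IsArc f s t) ↔ Fl.rk f t (t + 1) = Fl.rk f t t := by
  have := Fl.card_isArc_add_rk f t
  have := Fl.rk_succ_right_bounds f t t
  have : (∃ s, Fl.IsArc f s t) ↔ 0 < #{s | Fl.IsArc f s t} := by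
    simp [card_pos, filter_nonempty_iff]
  rw [this]
  omega

variable {Fl f} in
theorem IsArc.left_unique {s s' t : Fin n} (h : Fl.IsArc f s t) (h' : Fl.IsArc f s' t) :
    s = s' := by
  have := Fl.card_isArc_add_rk f t
  have := Fl.rk_succ_right_bounds f t t
  have hcard : #{s | Fl.IsArc f s t} ≤ 1 := by omega
  exact card_le_one.mp hcard s (by simpa using h) s' (by simpa using h')

def Paired (s t : Fin n) : Prop := Fl.IsArc f s t ∨ Fl.IsArc f t s

theorem rk_self_add_finrank_inf_range_add_finrank_inf_ker (hf : IsIdempotentElem f) {i : ℕ}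
    (hi : i ≤ n) :
    Fl.rk f i i + finrank ℂ ↥(Fl.space i ⊓ LinearMap.range f)
      + finrank ℂ ↥(Fl.space i ⊓ LinearMap.ker f) = 2 * i := by
  rw [rk, LinearMap.IsIdempotentElem.finrank_map_sup_add_finrank_inf_range_add_finrank_inf_ker
    hf, Fl.finrank_space hi]

theorem rk_succ_self_le (hf : IsIdempotentElem f) {i : ℕ}
    (h : Fl.rk f i (i + 1) = Fl.rk f i i) : Fl.rk f (i + 1) (i + 1) ≤ Fl.rk f i i := by
  have heq : (Fl.space i).map f ⊔ Fl.space i = (Fl.space i).map f ⊔ Fl.space (i + 1) :=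
    Submodule.eq_of_le_of_finrank_eq (sup_le_sup_left (Fl.space_mono i.le_succ) _) h.symm
  exact Submodule.finrank_mono
    (LinearMap.IsIdempotentElem.map_sup_le_of_le_map_sup hf (heq ▸ le_sup_right))

end CompleteFlag

namespace Clan

variable {p q : ℕ} (γ : Clan p q)

theorem FS_eq_plus_iff (k : Fin (p + q)) : γ.FS k = .plus ↔ γ.symbol k = .inr true := by
  rcases h : γ.symbol k with j | _ | _ <;> simp [FS, h, ite_eq_iff]

theorem FS_eq_minus_iff (k : Fin (p + q)) : γ.FS k = .minus ↔ γ.symbol k = .inr false := by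
  rcases h : γ.symbol k with j | _ | _ <;> simp [FS, h, ite_eq_iff]

theorem FS_eq_snd_iff (k : Fin (p + q)) : γ.FS k = .snd ↔ ∃ j, γ.symbol k = .inl j ∧ j < k := by
  rcases h : γ.symbol k with j | _ | _ <;> simp [FS, h]

theorem exists_symbol_eq_inl_iff (k : Fin (p + q)) :
    (∃ j, γ.symbol k = .inl j) ↔ γ.FS k = .fst ∨ γ.FS k = .snd := by
  rcases h : γ.symbol k with j | _ | _ <;> simp [FS, h, le_or_gt]

theorem cplus_eq_card_FS (i : ℕ) :
    γ.cplus i = #{k : Fin (p + q) | (k : ℕ) < i ∧ (γ.FS k = .plus ∨ γ.FS k = .snd)} := by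
  simp only [cplus, FS_eq_plus_iff, FS_eq_snd_iff]

theorem cminus_eq_card_FS (i : ℕ) :
    γ.cminus i = #{k : Fin (p + q) | (k : ℕ) < i ∧ (γ.FS k = .minus ∨ γ.FS k = .snd)} := by
  simp only [cminus, FS_eq_minus_iff, FS_eq_snd_iff]

variable {γ} in
theorem cplus_congr {lam : Clan p q} (h : lam.FS = γ.FS) (i : ℕ) : lam.cplus i = γ.cplus i := by
  rw [cplus_eq_card_FS, cplus_eq_card_FS, h]

variable {γ} in
theorem cminus_congr {lam : Clan p q} (h : lam.FS = γ.FS) (i : ℕ) :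
    lam.cminus i = γ.cminus i := by
  rw [cminus_eq_card_FS, cminus_eq_card_FS, h]

theorem cplus_succ (k : Fin (p + q)) :
    γ.cplus (k + 1) = γ.cplus k + if γ.FS k = .plus ∨ γ.FS k = .snd then 1 else 0 := by
  rw [cplus_eq_card_FS, cplus_eq_card_FS]
  exact Fin.card_filter_val_lt_succ (fun k => γ.FS k = .plus ∨ γ.FS k = .snd) k.is_lt

theorem cminus_succ (k : Fin (p + q)) :
    γ.cminus (k + 1) = γ.cminus k + if γ.FS k = .minus ∨ γ.FS k = .snd then 1 else 0 := by
  rw [cminus_eq_card_FS, cminus_eq_card_FS]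
  exact Fin.card_filter_val_lt_succ (fun k => γ.FS k = .minus ∨ γ.FS k = .snd) k.is_lt

end Clan

/-- `Fl ∈ Y₀`, for the clan `γ`. -/
def MemY0 {p q : ℕ} (γ : Clan p q) (Fl : CompleteFlag (p + q)) : Prop :=
  ∀ i : ℕ, 1 ≤ i → ∀ hi : i ≤ p + q,
    finrank ℂ ↥(Fl.F ⟨i, by omega⟩ ⊓ Efirst (p + q) p) = γ.cplus i ∧
    finrank ℂ ↥(Fl.F ⟨i, by omega⟩ ⊓ Elast (p + q) q) = γ.cminus i

theorem memY0_congr {p q : ℕ} {γ lam : Clan p q} (h : lam.FS = γ.FS)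
    (Fl : CompleteFlag (p + q)) :
    MemY0 lam Fl ↔ MemY0 γ Fl := by
  simp only [MemY0, Clan.cplus_congr h, Clan.cminus_congr h]

open Classical in
def arcSymbol {p q : ℕ} (γ : Clan p q) (Fl : CompleteFlag (p + q)) (k : Fin (p + q)) :
    Fin (p + q) ⊕ Bool :=
  if hk : ∃ t, Fl.Paired (projE (p + q) p) k t then .inl hk.choose else γ.symbol k

namespace MemY0

variable {p q : ℕ} {γ : Clan p q} {Fl : CompleteFlag (p + q)} (h : MemY0 γ Fl)
include h

theorem finrank_space_inf_Efirst {i : ℕ} (hi : i ≤ p + q) :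
    finrank ℂ ↥(Fl.space i ⊓ Efirst (p + q) p) = γ.cplus i := by
  rcases Nat.eq_zero_or_pos i with rfl | hi0
  · simp [Fl.space_zero, Clan.cplus]
  · rw [← Fl.F_mk_eq_space (Nat.lt_succ_of_le hi)]
    exact (h i hi0 hi).1

theorem finrank_space_inf_Elast {i : ℕ} (hi : i ≤ p + q) :
    finrank ℂ ↥(Fl.space i ⊓ Elast (p + q) q) = γ.cminus i := by
  rcases Nat.eq_zero_or_pos i with rfl | hi0
  · simp [Fl.space_zero, Clan.cminus]
  · rw [← Fl.F_mk_eq_space (Nat.lt_succ_of_le hi)]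
    exact (h i hi0 hi).2

theorem rk_succ_succ_add (k : Fin (p + q)) :
    Fl.rk (projE (p + q) p) (k + 1) (k + 1)
      + (if γ.FS k = .plus ∨ γ.FS k = .snd then 1 else 0)
      + (if γ.FS k = .minus ∨ γ.FS k = .snd then 1 else 0)
      = Fl.rk (projE (p + q) p) k k + 2 := by
  have hdiag {i : ℕ} (hi : i ≤ p + q) :
      Fl.rk (projE (p + q) p) i i + γ.cplus i + γ.cminus i = 2 * i := by
    rw [← h.finrank_space_inf_Efirst hi, ← h.finrank_space_inf_Elast hi, ← range_projE,
      ← ker_projE]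
    exact Fl.rk_self_add_finrank_inf_range_add_finrank_inf_ker _ (isIdempotentElem_projE _ _) hi
  have := hdiag k.is_lt.le
  have := hdiag (i := k + 1) k.is_lt
  rw [γ.cplus_succ, γ.cminus_succ] at this
  omega

theorem rk_succ_right_eq_iff (k : Fin (p + q)) :
    Fl.rk (projE (p + q) p) k (k + 1) = Fl.rk (projE (p + q) p) k k ↔ γ.FS k = .snd := by
  have := h.rk_succ_succ_add k
  have := Fl.rk_succ_right_bounds (projE (p + q) p) k k
  have := Fl.rk_succ_left_bounds (projE (p + q) p) k (k + 1)
  have := Fl.rk_succ_self_le _ (isIdempotentElem_projE (p + q) p) (i := k)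
  -- the diagonal step is two unit steps, and the second cannot happen without the first
  rcases hFS : γ.FS k <;>
    simp only [hFS, reduceCtorEq, or_self, or_false, if_true, if_false, iff_true, iff_false,
      or_true] at * <;> omega

theorem raises_succ_iff (k : Fin (p + q)) :
    Fl.Raises (projE (p + q) p) k (k + 1) ↔ γ.FS k = .fst := by
  have := h.rk_succ_succ_add k
  have := h.rk_succ_right_eq_iff k
  have := Fl.rk_succ_right_bounds (projE (p + q) p) k k
  have := Fl.rk_succ_left_bounds (projE (p + q) p) k (k + 1)
  rw [CompleteFlag.Raises]
  rcases hFS : γ.FS k <;>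
    simp only [hFS, reduceCtorEq, or_self, or_false, if_true, if_false, iff_true, iff_false,
      or_true] at * <;> omega

theorem exists_isArc_iff (k : Fin (p + q)) :
    (∃ t, Fl.IsArc (projE (p + q) p) k t) ↔ γ.FS k = .fst :=
  (Fl.exists_isArc_iff_raises _ k).trans (h.raises_succ_iff k)

theorem exists_isArc_left_iff (k : Fin (p + q)) :
    (∃ s, Fl.IsArc (projE (p + q) p) s k) ↔ γ.FS k = .snd :=
  (Fl.exists_isArc_left_iff _ k).trans (h.rk_succ_right_eq_iff k)

theorem paired_unique {k t t' : Fin (p + q)} (ht : Fl.Paired (projE (p + q) p) k t)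
    (ht' : Fl.Paired (projE (p + q) p) k t') : t = t' := by
  have not_opener_and_closer {t t'} (ht : Fl.IsArc (projE (p + q) p) k t)
      (ht' : Fl.IsArc (projE (p + q) p) t' k) : False := by
    have hfst := (h.exists_isArc_iff k).mp ⟨t, ht⟩
    rw [(h.exists_isArc_left_iff k).mp ⟨t', ht'⟩] at hfst
    cases hfst
  rcases ht with ht | ht <;> rcases ht' with ht' | ht'
  exacts [ht.right_unique ht', (not_opener_and_closer ht ht').elim,
    (not_opener_and_closer ht' ht).elim, ht.left_unique ht']

theorem exists_paired_iff (k : Fin (p + q)) :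
    (∃ t, Fl.Paired (projE (p + q) p) k t) ↔ ∃ t, γ.symbol k = .inl t := by
  rw [γ.exists_symbol_eq_inl_iff, ← h.exists_isArc_iff, ← h.exists_isArc_left_iff]
  exact exists_or

theorem arcSymbol_eq_inl_iff {k t : Fin (p + q)} :
    arcSymbol γ Fl k = .inl t ↔ Fl.Paired (projE (p + q) p) k t := by
  by_cases hk : ∃ t, Fl.Paired (projE (p + q) p) k t
  · rw [arcSymbol, dif_pos hk, Sum.inl.injEq]
    exact ⟨fun ht => ht ▸ hk.choose_spec, h.paired_unique hk.choose_spec⟩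
  · rw [arcSymbol, dif_neg hk]
    exact iff_of_false (fun ht => hk ((h.exists_paired_iff k).mpr ⟨t, ht⟩)) fun ht => hk ⟨t, ht⟩

theorem arcSymbol_eq_inr_iff {k : Fin (p + q)} {b : Bool} :
    arcSymbol γ Fl k = .inr b ↔ γ.symbol k = .inr b := by
  by_cases hk : ∃ t, Fl.Paired (projE (p + q) p) k t
  · obtain ⟨t, ht⟩ := (h.exists_paired_iff k).mp hk
    simp [arcSymbol, hk, ht]
  · rw [arcSymbol, dif_neg hk]

def arcClan : Clan p q where
  symbol := arcSymbol γ Fl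
  mate_ne i j hij := by
    rcases h.arcSymbol_eq_inl_iff.mp hij with hij | hij
    exacts [hij.1.ne', hij.1.ne]
  mate_invol i j hij := h.arcSymbol_eq_inl_iff.mpr (Or.symm (h.arcSymbol_eq_inl_iff.mp hij))
  balance := by simpa only [h.arcSymbol_eq_inr_iff] using γ.balance

theorem FS_arcClan : h.arcClan.FS = γ.FS := by
  funext k
  by_cases hk : ∃ t, Fl.Paired (projE (p + q) p) k t
  · obtain ⟨t, ht⟩ := hk
    have hsym : h.arcClan.symbol k = .inl t := h.arcSymbol_eq_inl_iff.mpr ht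
    rcases ht with ht | ht
    · rw [(h.exists_isArc_iff k).mp ⟨t, ht⟩, Clan.FS, hsym]
      simp [not_lt.mpr ht.1.le]
    · rw [(h.exists_isArc_left_iff k).mp ⟨t, ht⟩, Clan.FS, hsym]
      simp [ht.1]
  · have hsym : h.arcClan.symbol k = γ.symbol k := dif_neg hk
    rw [Clan.FS, Clan.FS, hsym]

theorem cpair_arcClan {i j : ℕ} (hij : i < j) :
    h.arcClan.cpair i j =
      #{s : Fin (p + q) | (s : ℕ) < i ∧ Fl.Raises (projE (p + q) p) s j} := by
  refine congrArg card (filter_congr fun s _ => and_congr_right fun hsi => ?_)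
  rw [← Fl.exists_isArc_le_iff _ (hsi.trans hij)]
  refine exists_congr fun t => ?_
  rw [← and_assoc]
  refine and_congr_left fun _ => ⟨fun ⟨hst, hlt⟩ => ?_, fun ht => ⟨?_, ht.1⟩⟩
  · rcases h.arcSymbol_eq_inl_iff.mp hst with ht | ht
    exacts [ht, absurd ht.1 (not_lt.mpr hlt.le)]
  · exact h.arcSymbol_eq_inl_iff.mpr (Or.inl ht)

theorem memQ_arcClan : MemQ h.arcClan Fl := by
  refine ⟨(memY0_congr h.FS_arcClan Fl).mpr h, fun i j _ hij hj => ?_⟩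
  rw [Fl.F_mk_eq_space, Fl.F_mk_eq_space, h.cpair_arcClan hij]
  exact Fl.rk_eq_add_card _ (by omega) hj

end MemY0

/-- A complete flag satisfies the dimension conditions
`dim(F_i ∩ E_p) = γ(i;+)`, `dim(F_i ∩ Ẽ_q) = γ(i;-)` for all `i` iff it lies
in `Q_λ` for some clan `λ` with the same FS-pattern as `γ`; i.e. `Y₀` is the
union of the `Q_λ` over clans `λ` with `FS(λ) = FS(γ)`. -/
theorem Y0_eq_union_QFS {p q : ℕ} (γ : Clan p q)
    (Fl : CompleteFlag (p + q)) :
    (∀ i : ℕ, 1 ≤ i → ∀ hi : i ≤ p + q,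
        finrank ℂ ↥(Fl.F ⟨i, by omega⟩ ⊓ Efirst (p + q) p) = γ.cplus i ∧
        finrank ℂ ↥(Fl.F ⟨i, by omega⟩ ⊓ Elast (p + q) q) = γ.cminus i)
      ↔ ∃ lam : Clan p q, lam.FS = γ.FS ∧ MemQ lam Fl := by
  refine ⟨fun (h : MemY0 γ Fl) => ⟨h.arcClan, h.FS_arcClan, h.memQ_arcClan⟩, ?_⟩
  rintro ⟨lam, hFS, hQ, -⟩
  exact (memY0_congr hFS Fl).mp hQ
end
end

section
/- Let p,q ≥ 0, n = p+q ≥ 1, let γ be a (p,q)-clan, and let w₀ ∈ S_n be the longest element (w₀(i) = n+1−i). Then every complete flag F in the set Y₀ = { F : dim(F_i ∩ E_p) = γ(i;+) and dim(F_i ∩ Ẽ_q) = γ(i;−) for all 1 ≤ i ≤ n } satisfies, for all i,j ∈ {1,…,n}, the inequalities dim(F_i ∩ E_j) ≥ r_{u(γ)}(i,j) and dim(F_i ∩ Ẽ_j) ≥ r_{w₀·v(γ)}(i,j). In particular, Y₀ (and hence the K-orbit Q_γ ⊆ Y₀) is contained in the Richardson set determined by the Schubert conditions of u(γ) and the opposite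 Schubert conditions of v(γ). -/
open Finset Module

noncomputable section

/-!
For a flag in `Y₀`, `dim(F_i ∩ E_p) = γ(i;+)` counts the positions of `γ₊` among the first `i`,
and `u(γ)` fills `γ₊` downward from `p` and `γ₋` downward from `n`. Hence the positions `k ≤ i`
with `u(k) ≤ j` are the `γ₊`-positions after the first `p - j` and the `γ₋`-positions after the
first `n - j`, so `r_u(i,j) ≤ (γ(i;+) - (p-j))⁺ + (i - γ(i;+) - (n-j))⁺`. On the other side,
`dim(F_i ∩ E_j)` is at least `γ(i;+) - (p - j)` (cut `F_i ∩ E_p` by `E_j`, of codimension `p - j`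
in `E_p`) and at least `i + j - n`, which together dominate the bound. The opposite Schubert
conditions are the same argument for the flag `Ẽ`: `w₀ · v(γ)` fills `γ̃₋` downward from `q` and
`γ̃₊` downward from `n`, and `dim(F_i ∩ Ẽ_q) = γ(i;-)` counts `γ̃₋`.
-/

theorem Submodule.finrank_add_finrank_le_finrank_inf_add {K V : Type*} [Field K]
    [AddCommGroup V] [Module K V] [FiniteDimensional K V] {A B C : Submodule K V}
    (hA : A ≤ C) (hB : B ≤ C) :
    finrank K A + finrank K B ≤ finrank K ↥(A ⊓ B) + finrank K C := by
  rw [← Submodule.finrank_sup_add_finrank_inf_eq, add_comm]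
  exact Nat.add_le_add_left (Submodule.finrank_mono (sup_le hA hB)) _

theorem finrank_iInf_ker_proj {K ι : Type*} [Field K] [Fintype ι] (J : Set ι)
    [DecidablePred (· ∈ Jᶜ)] :
    finrank K ↥(⨅ k ∈ J, LinearMap.ker (LinearMap.proj k : (ι → K) →ₗ[K] K))
      = Fintype.card ↥Jᶜ := by
  rw [(LinearMap.iInfKerProjEquiv K (fun _ ↦ K) (disjoint_compl_left (a := J))
    (by simp)).finrank_eq]
  simp

theorem Efirst_mono (n : ℕ) : Monotone (Efirst n) :=
  fun _ _ h ↦ biInf_mono fun _ hk ↦ h.trans hk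

theorem Elast_mono (n : ℕ) : Monotone (Elast n) :=
  fun _ _ h ↦ biInf_mono fun k (hk : k.val < n - _) ↦ (by omega : k.val < n - _)

theorem finrank_Efirst {n j : ℕ} (hj : j ≤ n) : finrank ℂ ↥(Efirst n j) = j := by
  classical
  rw [Efirst, finrank_iInf_ker_proj, Fintype.card_subtype]
  simp [Fin.card_filter_val_lt, hj]

theorem finrank_Elast {n j : ℕ} (hj : j ≤ n) : finrank ℂ ↥(Elast n j) = j := by
  classical
  rw [Elast, finrank_iInf_ker_proj, Fintype.card_subtype]
  simp only [Set.mem_compl_iff, Set.mem_ofPred_eq]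
  rw [Finset.filter_not, Finset.card_sdiff_of_subset (Finset.filter_subset _ _),
    Fin.card_filter_val_lt, Finset.card_univ, Fintype.card_fin]
  omega

theorem Finset.card_le_card_sub_of_le_card_filter_lt {α : Type*} [LinearOrder α]
    {X T : Finset α} {a : ℕ} (hXT : X ⊆ T) (ha : ∀ k ∈ X, a ≤ #(T.filter (· < k))) :
    #X ≤ #T - a := by
  rcases X.eq_empty_or_nonempty with rfl | hX
  · simp
  -- At least `a` elements of `T` lie below the least element of `X`, none of them in `X`.
  have hdisj : Disjoint X (T.filter (· < X.min' hX)) :=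
    Finset.disjoint_left.mpr fun k hk hk' ↦
      (Finset.min'_le X k hk).not_gt (Finset.mem_filter.mp hk').2
  have hunion :=
    Finset.card_le_card (Finset.union_subset hXT (Finset.filter_subset (· < X.min' hX) T))
  rw [Finset.card_union_of_disjoint hdisj] at hunion
  have := ha _ (Finset.min'_mem X hX)
  omega

theorem Finset.card_filter_add_card_compl_filter {α : Type*} [Fintype α] [DecidableEq α]
    (S : Finset α) (p : α → Prop) [DecidablePred p] :
    #(S.filter p) + #(Sᶜ.filter p) = #(univ.filter p) := by
  rw [← Finset.card_union_of_disjoint (Finset.disjoint_filter_filter disjoint_compl_right),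
    ← Finset.filter_union, Finset.union_compl]

theorem Finset.filter_compl_eq {α : Type*} [Fintype α] [DecidableEq α] (S : Finset α)
    (p : α → Prop) [DecidablePred p] :
    Sᶜ.filter p = univ.filter fun x ↦ x ∉ S ∧ p x := by
  ext
  simp

/-- `w` assigns the values `a, a-1, …` to the positions of `S` taken in increasing order and
`n, n-1, …` to the remaining positions taken in increasing order (`1`-based values, as in
`IsUPerm`). -/
def IsDescendingFill {n : ℕ} (S : Finset (Fin n)) (a : ℕ) (w : Equiv.Perm (Fin n)) : Prop :=
  ∀ k, (k ∈ S → (w k).val + 1 + #(S.filter (· < k)) = a) ∧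
    (k ∉ S → (w k).val + 1 + #(Sᶜ.filter (· < k)) = n)

theorem card_filter_lt_and_lt_le {n b : ℕ} {T : Finset (Fin n)} {w : Fin n → Fin n}
    (hT : ∀ k ∈ T, (w k).val + 1 + #(T.filter (· < k)) = b) (i j : ℕ) :
    #(T.filter fun k ↦ k.val < i ∧ (w k).val < j) ≤ #(T.filter (·.val < i)) - (b - j) := by
  refine Finset.card_le_card_sub_of_le_card_filter_lt
    (Finset.monotone_filter_right T fun _ _ h ↦ h.1) fun k hk ↦ ?_
  obtain ⟨hkT, hki, hkj⟩ := Finset.mem_filter.mp hk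
  have hbelow : (T.filter (·.val < i)).filter (· < k) = T.filter (· < k) := by
    rw [Finset.filter_filter]
    exact Finset.filter_congr fun l _ ↦ and_iff_right_of_imp fun hl ↦ (Fin.lt_def.mp hl).trans hki
  rw [hbelow]
  have := hT k hkT
  omega

theorem IsDescendingFill.rankMatrix_le {n a : ℕ} {S : Finset (Fin n)} {w : Equiv.Perm (Fin n)}
    (hw : IsDescendingFill S a w) (i j : ℕ) :
    rankMatrix w i j
      ≤ (#(S.filter (·.val < i)) - (a - j)) + (#(Sᶜ.filter (·.val < i)) - (n - j)) := by
  rw [rankMatrix, ← Finset.card_filter_add_card_compl_filter]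
  exact Nat.add_le_add
    (card_filter_lt_and_lt_le (fun k hk ↦ (hw k).1 hk) i j)
    (card_filter_lt_and_lt_le (fun k hk ↦ (hw k).2 (Finset.mem_compl.mp hk)) i j)

theorem IsDescendingFill.rankMatrix_le_finrank_inf {K V : Type*} [Field K] [AddCommGroup V]
    [Module K V] [FiniteDimensional K V] {n a i j : ℕ} (hV : finrank K V = n)
    {G : ℕ → Submodule K V} (hG : Monotone G) (hGdim : ∀ j ≤ n, finrank K ↥(G j) = j)
    {S : Finset (Fin n)} {w : Equiv.Perm (Fin n)} (hw : IsDescendingFill S a w)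
    {W : Submodule K V} (hW : finrank K ↥W = i)
    (hWa : finrank K ↥(W ⊓ G a) = #(S.filter (·.val < i)))
    (ha : a ≤ n) (hi : i ≤ n) (hj : j ≤ n) :
    rankMatrix w i j ≤ finrank K ↥(W ⊓ G j) := by
  have hrank := hw.rankMatrix_le i j
  have hcount := Finset.card_filter_add_card_compl_filter S (·.val < i)
  rw [Fin.card_filter_val_lt, min_eq_right hi] at hcount
  have hgeneric : i + j ≤ finrank K ↥(W ⊓ G j) + n := by
    have := Submodule.finrank_add_finrank_le_finrank_inf_add (le_top : W ≤ ⊤) (le_top : G j ≤ ⊤)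
    rwa [hW, hGdim j hj, finrank_top, hV] at this
  have hthrough : finrank K ↥(W ⊓ G a) ≤ finrank K ↥(W ⊓ G j) + (a - j) := by
    rcases le_total j a with hja | haj
    · have := Submodule.finrank_add_finrank_le_finrank_inf_add
        (inf_le_right : W ⊓ G a ≤ G a) (hG hja)
      rw [inf_assoc, inf_eq_right.mpr (hG hja), hGdim j hj, hGdim a ha] at this
      omega
    · exact (Submodule.finrank_mono (inf_le_inf_left W (hG haj))).trans (Nat.le_add_right _ _)
  omega

namespace Clan

variable {p q : ℕ}

theorem cplus_eq_card (γ : Clan p q) (i : ℕ) :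
    γ.cplus i = #(γ.plusSet.filter (·.val < i)) := by
  rw [cplus, plusSet, Finset.filter_filter]
  exact congrArg Finset.card (Finset.filter_congr fun _ _ ↦ and_comm)

theorem notMem_tplusSet_iff (γ : Clan p q) (k : Fin (p + q)) :
    k ∉ γ.tplusSet ↔ γ.symbol k = Sum.inr false ∨ ∃ j, γ.symbol k = Sum.inl j ∧ j < k := by
  simp only [tplusSet, Finset.mem_filter, Finset.mem_univ, true_and]
  rcases h : γ.symbol k with m | b
  · have := γ.mate_ne k m h
    simp only [Sum.inl.injEq, reduceCtorEq, false_or, exists_eq_left', not_lt]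
    exact ⟨fun hle ↦ lt_of_le_of_ne hle this, le_of_lt⟩
  · cases b <;> simp

theorem cminus_eq_card (γ : Clan p q) (i : ℕ) :
    γ.cminus i = #(γ.tplusSetᶜ.filter (·.val < i)) := by
  rw [cminus, Finset.filter_compl_eq]
  exact congrArg Finset.card (Finset.filter_congr fun k _ ↦ by rw [notMem_tplusSet_iff, and_comm])

end Clan

theorem IsUPerm.isDescendingFill {p q : ℕ} {γ : Clan p q} {u : Equiv.Perm (Fin (p + q))}
    (hu : IsUPerm γ u) : IsDescendingFill γ.plusSet p u := by
  refine fun k ↦ ⟨(hu k).1, fun hk ↦ ?_⟩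
  rw [Finset.filter_compl_eq]
  exact (hu k).2 hk

theorem IsVPerm.isDescendingFill_revPerm_mul {p q : ℕ} {γ : Clan p q}
    {v : Equiv.Perm (Fin (p + q))} (hv : IsVPerm γ v) :
    IsDescendingFill γ.tplusSetᶜ q (Fin.revPerm * v) := by
  intro k
  have hrev : ((Fin.revPerm * v : Equiv.Perm (Fin (p + q))) k).val = p + q - ((v k).val + 1) :=
    Fin.val_rev (v k)
  have hvk := (v k).isLt
  refine ⟨fun hk ↦ ?_, fun hk ↦ ?_⟩
  · have := (hv k).2 (Finset.mem_compl.mp hk)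
    rw [Finset.filter_compl_eq]
    omega
  · have := (hv k).1 (not_not.mp (Finset.mem_compl.not.mp hk))
    rw [compl_compl]
    omega

/-- Every flag in
`Y₀ = {F : dim(F_i ∩ E_p) = γ(i;+), dim(F_i ∩ Ẽ_q) = γ(i;-) ∀ i}` satisfies
the Schubert conditions of `u(γ)` and the opposite Schubert conditions of
`v(γ)`: `dim(F_i ∩ E_j) ≥ r_{u(γ)}(i,j)` and
`dim(F_i ∩ Ẽ_j) ≥ r_{w₀·v(γ)}(i,j)` for all `i,j`. -/
theorem Y0_subset_richardson {p q : ℕ} (γ : Clan p q)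
    (u v : Equiv.Perm (Fin (p + q))) (hu : IsUPerm γ u) (hv : IsVPerm γ v)
    (Fl : CompleteFlag (p + q))
    (hFl : ∀ i : ℕ, 1 ≤ i → ∀ hi : i ≤ p + q,
      finrank ℂ ↥(Fl.F ⟨i, by omega⟩ ⊓ Efirst (p + q) p) = γ.cplus i ∧
      finrank ℂ ↥(Fl.F ⟨i, by omega⟩ ⊓ Elast (p + q) q) = γ.cminus i) :
    ∀ i j : ℕ, 1 ≤ i → ∀ hi : i ≤ p + q, 1 ≤ j → j ≤ p + q →
      rankMatrix u i j ≤ finrank ℂ ↥(Fl.F ⟨i, by omega⟩ ⊓ Efirst (p + q) j) ∧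
      rankMatrix (Fin.revPerm * v) i j
        ≤ finrank ℂ ↥(Fl.F ⟨i, by omega⟩ ⊓ Elast (p + q) j) := by
  intro i j hi₁ hi _ hj
  have hV : finrank ℂ (Fin (p + q) → ℂ) = p + q := Module.finrank_fin_fun ℂ
  have hFi : finrank ℂ ↥(Fl.F ⟨i, by omega⟩) = i := Fl.finrank_eq _
  obtain ⟨hplus, hminus⟩ := hFl i hi₁ hi
  exact ⟨hu.isDescendingFill.rankMatrix_le_finrank_inf hV (Efirst_mono _)
      (fun _ ↦ finrank_Efirst) hFi (hplus.trans (γ.cplus_eq_card i)) (by omega) hi hj,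
    hv.isDescendingFill_revPerm_mul.rankMatrix_le_finrank_inf hV (Elast_mono _)
      (fun _ ↦ finrank_Elast) hFi (hminus.trans (γ.cminus_eq_card i)) (by omega) hi hj⟩
end
end
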